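/- In the on-chain-verified audit game, assume S_a > ((1 − p_a)/p_a)·R_a. Then in every pure Nash equilibrium σ, every non-storing SP receives no ✓ deterministic reports: for all distinct i, j with s_j = 0, the deterministic report satisfies r_i^j = 0; consequently (since N ≥ 3 and |{k ≠ j : r_k^j = 1}| = 0 ≤ N/2) no non-storing SP receives the storage reward R_s. -/

import Mathlib

/-!
On-chain-verified audit game: `N ≥ 3` storage providers (SPs), parameters
`R_s > 0` (storage reward), `R_a > 0` (per-audit reward), `c_s > 0` (storage cost),
`c_a > 0` (audit cost), `S_a ≥ 0` (slashing penalty), `p_a ∈ (0,1]` (inspection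
probability), `ε ∈ (0,1)` (noise). A pure strategy of SP `i` is a triple `(s, a, ρ)`:
a storage bit, audit bits for each other SP, and reporting policies `ρ j : Bool → Bool`
(report as a function of having received a valid proof).
-/

open Finset

/-- A pure strategy of storage provider `i` in the on-chain-verified audit game. -/
structure Strat (N : ℕ) (i : Fin N) where
  /-- whether `i` stores its assigned data -/
  s : Bool
  /-- whether `i` audits SP `j` (at cost `c_a`) -/
  a : {j : Fin N // j ≠ i} → Bool
  /-- `i`'s reporting policy about `j`, as a function of whether a valid proof was received -/
  ρ : {j : Fin N // j ≠ i} → Bool → Bool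

/-- Numerical value of a Boolean choice. -/
def b01 (b : Bool) : ℝ := if b then 1 else 0

/-- Expected audit payoff of the auditor from one ordered pair `(i,j)`, where `sj` is the
auditee's storage bit, `a` the auditor's audit bit, and `ρ` the auditor's reporting policy.
The backing probability is `β = 1 − ε` if the auditee stores and `0` otherwise; an unbacked
✓ report earns `(1 − p_a)·R_a − p_a·S_a` in expectation. -/
noncomputable def pairPayoff (Ra ca Sa pa ε : ℝ) (sj a : Bool) (ρ : Bool → Bool) : ℝ :=
  let β : ℝ := if sj then 1 - ε else 0
  let F : ℝ := (1 - pa) * Ra - pa * Sa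
  if a then β * b01 (ρ true) * Ra + (1 - β) * b01 (ρ false) * F - ca
  else b01 (ρ false) * (β * Ra + (1 - β) * F)

/-- The deterministic report of `i` about `j`: `r_i^j = ρ_i^j (a_i^j · s_j)`. -/
def report {N : ℕ} (σ : ∀ i : Fin N, Strat N i) (i : Fin N) (j : {j : Fin N // j ≠ i}) : Bool :=
  (σ i).ρ j ((σ i).a j && (σ j.1).s)

/-- Number of SPs `j ≠ i` whose deterministic report about `i` is ✓. -/
def trueReports {N : ℕ} (σ : ∀ i : Fin N, Strat N i) (i : Fin N) : ℕ :=
  (univ.filter fun j : {j : Fin N // j ≠ i} => report σ j.1 ⟨i, Ne.symm j.2⟩ = true).card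

/-- Total (expected) utility of SP `i`:
`u_i(σ) = R_s·1[|{j ≠ i : r_j^i = 1}| > N/2] − c_s·s_i + Σ_{j≠i} pairPayoff(i,j)`. -/
noncomputable def U {N : ℕ} (Rs Ra cs ca Sa pa ε : ℝ) (σ : ∀ i : Fin N, Strat N i)
    (i : Fin N) : ℝ :=
  Rs * (if (N : ℝ) / 2 < (trueReports σ i : ℝ) then 1 else 0)
    - cs * b01 (σ i).s
    + ∑ j : {j : Fin N // j ≠ i}, pairPayoff Ra ca Sa pa ε (σ j.1).s ((σ i).a j) ((σ i).ρ j)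

/-- Pure Nash equilibrium: no SP can strictly increase its own utility by unilaterally
changing its strategy. -/
def IsNashEq {N : ℕ} (Rs Ra cs ca Sa pa ε : ℝ) (σ : ∀ i : Fin N, Strat N i) : Prop :=
  ∀ (i : Fin N) (τ : Strat N i),
    U Rs Ra cs ca Sa pa ε (Function.update σ i τ) i ≤ U Rs Ra cs ca Sa pa ε σ i

/-- The honest strategy profile: store, audit everyone, report ✓ iff a valid proof
was received. -/
def honest (N : ℕ) : ∀ i : Fin N, Strat N i :=
  fun _ => ⟨true, fun _ => true, fun _ b => b⟩

/-- The fully dishonest strategy profile: don't store, don't audit, always report ✓. -/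
def dishonest (N : ℕ) : ∀ i : Fin N, Strat N i :=
  fun _ => ⟨false, fun _ => false, fun _ _ => true⟩

/-! Not storing turns every ✓ report about the auditee into an unbacked one. Under
`S_a > ((1 − p_a)/p_a)·R_a` an unbacked ✓ report has negative expected value, so an auditor
in equilibrium prefers to switch its report on an invalid proof to ✗; this deviation touches
neither its storage decision nor the reports it receives. -/

lemma unbacked_reward_neg {Ra Sa pa : ℝ} (hpa : 0 < pa) (hS : ((1 - pa) / pa) * Ra < Sa) :
    (1 - pa) * Ra - pa * Sa < 0 := by
  have : (1 - pa) * Ra < pa * Sa := by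
    rwa [div_mul_eq_mul_div, div_lt_iff₀ hpa, mul_comm Sa] at hS
  linarith

lemma pairPayoff_false (Ra ca Sa pa ε : ℝ) (a : Bool) (ρ : Bool → Bool) :
    pairPayoff Ra ca Sa pa ε false a ρ = b01 (ρ false) * ((1 - pa) * Ra - pa * Sa) - b01 a * ca := by
  cases a <;> simp [pairPayoff, b01]

lemma trueReports_update_self {N : ℕ} (σ : ∀ i : Fin N, Strat N i) (i : Fin N) (τ : Strat N i)
    (hs : τ.s = (σ i).s) : trueReports (Function.update σ i τ) i = trueReports σ i := by
  unfold trueReports report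
  congr 1
  refine filter_congr fun k _ => ?_
  simp [Function.update_of_ne k.2, hs]

lemma trueReports_eq_zero {N : ℕ} (σ : ∀ i : Fin N, Strat N i) (j : Fin N)
    (h : ∀ (i : Fin N) (hji : j ≠ i), report σ i ⟨j, hji⟩ = false) : trueReports σ j = 0 := by
  simp [trueReports, h]

section Deviation

variable {Rs Ra cs ca Sa pa ε : ℝ} {N : ℕ} (σ : ∀ i : Fin N, Strat N i) {i : Fin N}

def changeReport (j : {j : Fin N // j ≠ i}) (r : Bool → Bool) : Strat N i :=
  { σ i with ρ := Function.update (σ i).ρ j r }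

lemma U_changeReport (j : {j : Fin N // j ≠ i}) (r : Bool → Bool) :
    U Rs Ra cs ca Sa pa ε (Function.update σ i (changeReport σ j r)) i =
      U Rs Ra cs ca Sa pa ε σ i
        + pairPayoff Ra ca Sa pa ε (σ j.1).s ((σ i).a j) r
        - pairPayoff Ra ca Sa pa ε (σ j.1).s ((σ i).a j) ((σ i).ρ j) := by
  set f : {j : Fin N // j ≠ i} → ℝ := fun k =>
    pairPayoff Ra ca Sa pa ε (σ k.1).s ((σ i).a k) ((σ i).ρ k)
  have hsum : (fun k : {j : Fin N // j ≠ i} =>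
      pairPayoff Ra ca Sa pa ε (Function.update σ i (changeReport σ j r) k.1).s
        ((Function.update σ i (changeReport σ j r) i).a k)
        ((Function.update σ i (changeReport σ j r) i).ρ k)) =
      Function.update f j (pairPayoff Ra ca Sa pa ε (σ j.1).s ((σ i).a j) r) := by
    funext k
    by_cases hk : k = j
    · subst hk; simp [changeReport, Function.update_of_ne k.2]
    · simp [changeReport, Function.update_of_ne k.2, Function.update_of_ne hk, f]
  unfold U
  rw [trueReports_update_self σ i (changeReport σ j r) rfl, hsum, sum_update_of_mem (mem_univ j),
    sum_eq_add_sum_sdiff_singleton_of_mem (mem_univ j) f]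
  simp only [Function.update_self, changeReport, f]
  ring

def dropUnbackedReport (j : {j : Fin N // j ≠ i}) : Strat N i :=
  changeReport σ j fun b => b && (σ i).ρ j b

lemma U_dropUnbackedReport (j : {j : Fin N // j ≠ i}) (hj : (σ j.1).s = false) :
    U Rs Ra cs ca Sa pa ε (Function.update σ i (dropUnbackedReport σ j)) i =
      U Rs Ra cs ca Sa pa ε σ i - b01 ((σ i).ρ j false) * ((1 - pa) * Ra - pa * Sa) := by
  rw [dropUnbackedReport, U_changeReport, hj, pairPayoff_false, pairPayoff_false]
  simp only [Bool.false_and, b01, Bool.false_eq_true, if_false]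
  ring

end Deviation

lemma IsNashEq.report_eq_false {Rs Ra cs ca Sa pa ε : ℝ} {N : ℕ} {σ : ∀ i : Fin N, Strat N i}
    (hσ : IsNashEq Rs Ra cs ca Sa pa ε σ) (hF : (1 - pa) * Ra - pa * Sa < 0) {i j : Fin N}
    (hji : j ≠ i) (hj : (σ j).s = false) : report σ i ⟨j, hji⟩ = false := by
  have hdev := hσ i (dropUnbackedReport σ ⟨j, hji⟩)
  rw [U_dropUnbackedReport σ ⟨j, hji⟩ hj] at hdev
  simp only [report, hj, Bool.and_false]
  cases hρ : (σ i).ρ ⟨j, hji⟩ false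
  · rfl
  · rw [hρ, b01, if_pos rfl] at hdev
    linarith

theorem nash_nonstoring_gets_no_check_reports_general
    (N : ℕ) (Rs Ra cs ca Sa pa ε : ℝ)
    (hpa0 : 0 < pa)
    (hS : ((1 - pa) / pa) * Ra < Sa) :
    ∀ σ : ∀ i : Fin N, Strat N i, IsNashEq Rs Ra cs ca Sa pa ε σ →
      ∀ j : Fin N, (σ j).s = false →
        (∀ (i : Fin N) (h : j ≠ i), report σ i ⟨j, h⟩ = false) ∧
        trueReports σ j = 0 ∧
        (if (N : ℝ) / 2 < (trueReports σ j : ℝ) then (1 : ℝ) else 0) = 0 := by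
  intro σ hσ j hj
  have hreports : ∀ (i : Fin N) (h : j ≠ i), report σ i ⟨j, h⟩ = false := fun _ h =>
    hσ.report_eq_false (unbacked_reward_neg hpa0 hS) h hj
  have hzero := trueReports_eq_zero σ j hreports
  refine ⟨hreports, hzero, if_neg ?_⟩
  rw [hzero, Nat.cast_zero, not_lt]
  positivity

/-- If `S_a > ((1 − p_a)/p_a)·R_a`, then in every pure Nash equilibrium
every non-storing SP receives no ✓ deterministic reports: for all distinct `i, j` with
`s_j = 0` we have `r_i^j = 0`; consequently a non-storing SP has `0` ✓ reports and does
not receive the storage reward `R_s` (its storage-reward indicator is `0`). -/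
theorem nash_nonstoring_gets_no_check_reports
    (N : ℕ) (hN : 3 ≤ N) (Rs Ra cs ca Sa pa ε : ℝ)
    (hRs : 0 < Rs) (hRa : 0 < Ra) (hcs : 0 < cs) (hca : 0 < ca) (hSa : 0 ≤ Sa)
    (hpa0 : 0 < pa) (hpa1 : pa ≤ 1) (hε0 : 0 < ε) (hε1 : ε < 1)
    (hS : ((1 - pa) / pa) * Ra < Sa) :
    ∀ σ : ∀ i : Fin N, Strat N i, IsNashEq Rs Ra cs ca Sa pa ε σ →
      ∀ j : Fin N, (σ j).s = false →
        (∀ (i : Fin N) (h : j ≠ i), report σ i ⟨j, h⟩ = false) ∧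
        trueReports σ j = 0 ∧
        (if (N : ℝ) / 2 < (trueReports σ j : ℝ) then (1 : ℝ) else 0) = 0 :=
  nash_nonstoring_gets_no_check_reports_general N Rs Ra cs ca Sa pa ε hpa0 hS
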